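/- arXiv:0911.5267 — 4 statements merged into one kernel-verified Lean document; each statement's English description precedes it below -/
import Mathlib

section
/- There is no convex function ψ : [1,∞) → ℝ satisfying log x ≤ ψ(x) ≤ 2 log x for all x ≥ 1 and ψ(a) > 0 for some a > 1. -/
open Filter

theorem stmt_9 :
    ¬ ∃ ψ : ℝ → ℝ, ConvexOn ℝ (Set.Ici (1 : ℝ)) ψ ∧
      (∀ x : ℝ, 1 ≤ x → Real.log x ≤ ψ x ∧ ψ x ≤ 2 * Real.log x) ∧
      (∃ a : ℝ, 1 < a ∧ 0 < ψ a) := by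
  rintro ⟨ψ, hconv, hb, a, ha, hpos⟩
  have hψ1 : ψ 1 ≤ 0 := by simpa using (hb 1 le_rfl).2
  have htend : Tendsto (fun x : ℝ => 4 * (a - 1) * (Real.log x / x)) atTop (nhds 0) := by
    have h := Real.isLittleO_log_id_atTop.tendsto_div_nhds_zero
    simpa using (h.const_mul (4 * (a - 1)))
  have hev : ∀ᶠ x : ℝ in atTop, 4 * (a - 1) * (Real.log x / x) < ψ a :=
    htend.eventually_lt_const hpos
  obtain ⟨x, hxlt, hx2, hx2a⟩ :=
    (hev.and ((eventually_ge_atTop (2 : ℝ)).and (eventually_ge_atTop (2 * a)))).exists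
  have hax : a < x := lt_of_lt_of_le (by linarith) hx2a
  have hx1 : (1 : ℝ) < x := lt_trans ha hax
  set t : ℝ := (a - 1) / (x - 1) with ht
  have hxm1 : (0 : ℝ) < x - 1 := by linarith
  have ht0 : 0 ≤ t := div_nonneg (by linarith) (by linarith)
  have ht1 : t ≤ 1 := (div_le_one hxm1).2 (by linarith)
  have htmul : t * (x - 1) = a - 1 := div_mul_cancel₀ _ (ne_of_gt hxm1)
  have hmem1 : (1 : ℝ) ∈ Set.Ici (1 : ℝ) := Set.mem_Ici.2 le_rfl
  have hmemx : x ∈ Set.Ici (1 : ℝ) := Set.mem_Ici.2 (le_of_lt hx1)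
  have hkey := hconv.2 hmem1 hmemx (by linarith : (0:ℝ) ≤ 1 - t) ht0 (by ring)
  have hpt : (1 - t) • (1 : ℝ) + t • x = a := by
    simp only [smul_eq_mul]
    nlinarith [htmul]
  rw [hpt] at hkey
  have hψx : ψ x ≤ 2 * Real.log x := (hb x (le_of_lt hx1)).2
  have hlog0 : 0 ≤ Real.log x := Real.log_nonneg (le_of_lt hx1)
  have h1 : ψ a ≤ t * (2 * Real.log x) := by
    have : (1 - t) • ψ 1 + t • ψ x ≤ t * (2 * Real.log x) := by
      simp only [smul_eq_mul]
      nlinarith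
    linarith [hkey, this]
  -- compare t * 2 log x with 4(a-1) log x / x
  have h2 : t * (2 * Real.log x) ≤ 4 * (a - 1) * (Real.log x / x) := by
    rw [ht, div_mul_eq_mul_div]
    rw [div_le_iff₀ hxm1]
    have hxpos : (0:ℝ) < x := by linarith
    rw [mul_comm (4 * (a - 1)) _, div_mul_eq_mul_div, div_mul_eq_mul_div, le_div_iff₀ hxpos]
    nlinarith [mul_nonneg (mul_nonneg (by linarith : (0:ℝ) ≤ a - 1) hlog0)
      (by linarith : (0:ℝ) ≤ 2 * x - 4)]
  linarith
end

section
/- For positive definite matrices A, B and a vector ξ, ⟨ξ, (A:B) ξ⟩ = inf { ⟨ξ₁, A ξ₁⟩ + ⟨ξ₂, B ξ₂⟩ : ξ = ξ₁ + ξ₂ }, where A:B = (A⁻¹ + B⁻¹)⁻¹ is the parallel sum. -/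
open scoped ComplexOrder
open Matrix

/-!
With `w = (A⁻¹ + B⁻¹)⁻¹ ξ`, the vectors `u = A⁻¹ w` and `v = B⁻¹ w` decompose `ξ`, and
`⟨u, A u⟩ + ⟨v, B v⟩ = ⟨u + v, w⟩ = ⟨ξ, (A:B) ξ⟩`. Since `A u = B v`, the cross terms cancel when
the decomposition is perturbed to `(u + η, v - η)`, and the value grows by `⟨η, A η⟩ + ⟨η, B η⟩ ≥ 0`.
So the infimum is a minimum; this holds in any ordered field with a star operation, and the complex
statement follows by taking real parts, which are monotone for the partial order on `ℂ`.
-/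

namespace Matrix

variable {n : Type*} [Fintype n]

section CommRing

variable {R : Type*} [CommRing R] [StarRing R]

theorem IsHermitian.star_add_dotProduct_mulVec_add {M : Matrix n n R} (hM : M.IsHermitian)
    (x y : n → R) :
    star (x + y) ⬝ᵥ (M *ᵥ (x + y)) =
      star x ⬝ᵥ (M *ᵥ x) + (star (M *ᵥ x) ⬝ᵥ y + star y ⬝ᵥ (M *ᵥ x)) + star y ⬝ᵥ (M *ᵥ y) := by
  have hxy : star x ⬝ᵥ (M *ᵥ y) = star (M *ᵥ x) ⬝ᵥ y := by
    rw [star_mulVec, hM.eq, dotProduct_mulVec]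
  simp only [star_add, mulVec_add, add_dotProduct, dotProduct_add, hxy]
  ring

theorem star_add_dotProduct_mulVec_add_add_star_sub_dotProduct_mulVec_sub_of_mulVec_eq
    {A B : Matrix n n R} (hA : A.IsHermitian) (hB : B.IsHermitian) {u v : n → R}
    (huv : A *ᵥ u = B *ᵥ v) (y : n → R) :
    star (u + y) ⬝ᵥ (A *ᵥ (u + y)) + star (v - y) ⬝ᵥ (B *ᵥ (v - y)) =
      star u ⬝ᵥ (A *ᵥ u) + star v ⬝ᵥ (B *ᵥ v) +
        (star y ⬝ᵥ (A *ᵥ y) + star y ⬝ᵥ (B *ᵥ y)) := by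
  rw [sub_eq_add_neg, hA.star_add_dotProduct_mulVec_add, hB.star_add_dotProduct_mulVec_add, huv]
  simp only [star_neg, mulVec_neg, dotProduct_neg, neg_dotProduct, neg_neg]
  ring

end CommRing

variable {K : Type*} [Field K] [PartialOrder K] [StarRing K] [IsOrderedRing K] [DecidableEq n]

theorem PosDef.isLeast_star_dotProduct_inv_add_inv_inv_mulVec {A B : Matrix n n K}
    (hA : A.PosDef) (hB : B.PosDef) (ξ : n → K) :
    IsLeast {r | ∃ ξ₁ ξ₂ : n → K, ξ = ξ₁ + ξ₂ ∧
        r = star ξ₁ ⬝ᵥ (A *ᵥ ξ₁) + star ξ₂ ⬝ᵥ (B *ᵥ ξ₂)}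
      (star ξ ⬝ᵥ ((A⁻¹ + B⁻¹)⁻¹ *ᵥ ξ)) := by
  have hAdet := (isUnit_iff_isUnit_det A).1 hA.isUnit
  have hBdet := (isUnit_iff_isUnit_det B).1 hB.isUnit
  have hABdet := (isUnit_iff_isUnit_det _).1 (hA.inv.add hB.inv).isUnit
  set w := (A⁻¹ + B⁻¹)⁻¹ *ᵥ ξ
  set u := A⁻¹ *ᵥ w
  set v := B⁻¹ *ᵥ w
  have hAu : A *ᵥ u = w := by rw [mulVec_mulVec, mul_nonsing_inv _ hAdet, one_mulVec]
  have hBv : B *ᵥ v = w := by rw [mulVec_mulVec, mul_nonsing_inv _ hBdet, one_mulVec]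
  have huv : u + v = ξ := by
    rw [← add_mulVec, mulVec_mulVec, mul_nonsing_inv _ hABdet, one_mulVec]
  have hvalue : star u ⬝ᵥ (A *ᵥ u) + star v ⬝ᵥ (B *ᵥ v) = star ξ ⬝ᵥ w := by
    rw [hAu, hBv, ← add_dotProduct, ← star_add, huv]
  refine ⟨⟨u, v, huv.symm, hvalue.symm⟩, ?_⟩
  rintro _ ⟨ξ₁, ξ₂, hξ, rfl⟩
  have h₁ : ξ₁ = u + (ξ₁ - u) := by abel
  have h₂ : ξ₂ = v - (ξ₁ - u) := by rw [← sub_eq_of_eq_add' hξ, ← huv]; abel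
  rw [h₁, h₂, star_add_dotProduct_mulVec_add_add_star_sub_dotProduct_mulVec_sub_of_mulVec_eq
    hA.isHermitian hB.isHermitian (hAu.trans hBv.symm), hvalue]
  exact le_add_of_nonneg_right <| add_nonneg (hA.posSemidef.dotProduct_mulVec_nonneg _)
    (hB.posSemidef.dotProduct_mulVec_nonneg _)

end Matrix

theorem stmt_11 {n : Type*} [Fintype n] [DecidableEq n]
    (A B : Matrix n n ℂ) (hA : A.PosDef) (hB : B.PosDef) (ξ : n → ℂ) :
    (dotProduct (star ξ) (((A⁻¹ + B⁻¹)⁻¹) *ᵥ ξ)).re =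
      sInf {r : ℝ | ∃ ξ₁ ξ₂ : n → ℂ, ξ = ξ₁ + ξ₂ ∧
        r = (dotProduct (star ξ₁) (A *ᵥ ξ₁)).re +
            (dotProduct (star ξ₂) (B *ᵥ ξ₂)).re} := by
  have hS : {r : ℝ | ∃ ξ₁ ξ₂ : n → ℂ, ξ = ξ₁ + ξ₂ ∧
      r = (star ξ₁ ⬝ᵥ (A *ᵥ ξ₁)).re + (star ξ₂ ⬝ᵥ (B *ᵥ ξ₂)).re} =
      RCLike.re '' {z | ∃ ξ₁ ξ₂ : n → ℂ, ξ = ξ₁ + ξ₂ ∧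
        z = star ξ₁ ⬝ᵥ (A *ᵥ ξ₁) + star ξ₂ ⬝ᵥ (B *ᵥ ξ₂)} := by
    ext r
    simp [eq_comm]
  rw [hS, (RCLike.re_monotone.map_isLeast
    (hA.isLeast_star_dotProduct_inv_add_inv_inv_mulVec hB ξ)).csInf_eq]
  rfl
end

section
/- Let h : (0,∞) → ℝ be concave, differentiable, with h(1) = 1, h'(1) = 1/2, and h(x) ≤ (x+1)/2 for all x > 0. If for some a > 1 one has h'(a) ≥ (h(a) − 1)/(a − 1), then h(x) = (x+1)/2 for all x in [1, a]. -/
/-!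
On `[1, a]` the concave function `h` lies above its chord and below its tangent line at `a`.
The hypothesis on `h'(a)` makes these two lines coincide, so `h` is affine on `[1, a]`; its slope
there is the right derivative at `1`, which is `1 / 2`.
-/

open Set

theorem ConcaveOn.eqOn_Icc_of_slope_le_deriv {S : Set ℝ} {f : ℝ → ℝ} {x y : ℝ}
    (hf : ConcaveOn ℝ S f) (hx : x ∈ S) (hy : y ∈ S) (hxy : x < y)
    (hd : DifferentiableAt ℝ f y) (hslope : slope f x y ≤ deriv f y) :
    EqOn f (fun z => f x + slope f x y * (z - x)) (Icc x y) := by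
  have hfy : f y = f x + slope f x y * (y - x) := by
    rw [slope_def_field, div_mul_cancel₀ _ (sub_ne_zero.2 hxy.ne')]
    ring
  rintro z ⟨hxz, hzy⟩
  rcases hxz.eq_or_lt with rfl | hxz
  · simp
  rcases hzy.eq_or_lt with rfl | hzy
  · exact hfy
  have hz : z ∈ S := hf.1.ordConnected.out hx hy ⟨hxz.le, hzy.le⟩
  have below_tangent : slope f x y ≤ slope f z y := hslope.trans (hf.deriv_le_slope hz hy hzy hd)
  have above_chord : slope f x y ≤ slope f x z := below_tangent.trans <| by
    simpa only [slope_def_field] using hf.slope_anti_adjacent hx hy hxz hzy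
  rw [slope_def_field f z y, le_div_iff₀ (sub_pos.2 hzy)] at below_tangent
  rw [slope_def_field f x z, le_div_iff₀ (sub_pos.2 hxz)] at above_chord
  exact le_antisymm (by linarith) (by linarith)

theorem deriv_eq_of_eqOn_Icc_affine {f : ℝ → ℝ} {x y c m : ℝ} (hxy : x < y)
    (hf : DifferentiableAt ℝ f x) (heq : EqOn f (fun z => c + m * (z - x)) (Icc x y)) :
    deriv f x = m := by
  have hline : HasDerivAt (fun z => c + m * (z - x)) m x := by
    simpa using (((hasDerivAt_id x).sub_const x).const_mul m).const_add c
  have hf_right : HasDerivWithinAt f m (Ici x) x :=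
    hline.hasDerivWithinAt.congr_of_eventuallyEq_of_mem
      (Filter.eventually_of_mem (Icc_mem_nhdsGE hxy) heq) self_mem_Ici
  exact (uniqueDiffWithinAt_Ici x).eq_deriv _ hf.hasDerivAt.hasDerivWithinAt hf_right

theorem stmt_16_general (h : ℝ → ℝ)
    (hconc : ConcaveOn ℝ (Set.Ioi (0 : ℝ)) h)
    (hdiff : ∀ x ∈ Set.Ioi (0 : ℝ), DifferentiableAt ℝ h x)
    (h1 : h 1 = 1) (hd1 : deriv h 1 = 1/2)
    (a : ℝ) (ha : 1 < a)
    (hder : (h a - 1) / (a - 1) ≤ deriv h a) :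
    ∀ x ∈ Set.Icc (1 : ℝ) a, h x = (x + 1) / 2 := by
  have h1_mem : (1 : ℝ) ∈ Ioi 0 := mem_Ioi.2 one_pos
  have ha_mem : a ∈ Ioi (0 : ℝ) := zero_lt_one.trans ha
  have haffine := hconc.eqOn_Icc_of_slope_le_deriv h1_mem ha_mem ha (hdiff a ha_mem)
    (by rwa [slope_def_field, h1])
  have hslope : slope h 1 a = 1 / 2 := by
    rw [← hd1, deriv_eq_of_eqOn_Icc_affine ha (hdiff 1 h1_mem) haffine]
  intro x hx
  rw [haffine hx, h1, hslope]
  ring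

theorem stmt_16 (h : ℝ → ℝ)
    (hconc : ConcaveOn ℝ (Set.Ioi (0 : ℝ)) h)
    (hdiff : ∀ x ∈ Set.Ioi (0 : ℝ), DifferentiableAt ℝ h x)
    (h1 : h 1 = 1) (hd1 : deriv h 1 = 1/2)
    (hub : ∀ x : ℝ, 0 < x → h x ≤ (x + 1) / 2)
    (a : ℝ) (ha : 1 < a)
    (hder : (h a - 1) / (a - 1) ≤ deriv h a) :
    ∀ x ∈ Set.Icc (1 : ℝ) a, h x = (x + 1) / 2 :=
  stmt_16_general h hconc hdiff h1 hd1 a ha hder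
end

section
/- Define φ(t) := t·h(2/t − 1) for 0 < t ≤ 1, where h : (0,∞) → ℝ is differentiable, concave, h(1)=1, h'(1)=1/2, h(x) ≤ (x+1)/2 for all x, and h is not equal to (x+1)/2 on any interval [1,a] with a>1. Then φ'(t) = h(2/t −1) − (2/t) h'(2/t − 1) > 0 for all t ∈ (0,1), so φ is strictly increasing on (0,1]. -/
/-!
With `a = 2 / t - 1 > 1` the derivative of `t ↦ t * h (2 / t - 1)` is `h a - (a + 1) * h' a`.
Concavity bounds `h' a` by the slope `(h a - 1) / (a - 1)` of the chord from `1`, and this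
slope is `< h a / (a + 1)` exactly when `h a < (a + 1) / 2`. That strict inequality holds
because a concave function lying below the line `(x + 1) / 2` and touching it at `1` and at `a`
coincides with it on all of `[1, a]`.
-/

open Set

theorem ConcaveOn.eqOn_Icc_of_le_of_eq {s : Set ℝ} {f g : ℝ → ℝ} (hf : ConcaveOn ℝ s f)
    (hg : ConvexOn ℝ s g) (hle : ∀ x ∈ s, f x ≤ g x) {x y : ℝ} (hx : x ∈ s) (hy : y ∈ s)
    (hfx : f x = g x) (hfy : f y = g y) : EqOn f g (Icc x y) := by
  intro z hz
  have hmin := (hf.sub hg).min_le_of_mem_Icc hx hy hz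
  simp only [Pi.sub_apply, hfx, hfy, sub_self, min_self, sub_nonneg] at hmin
  exact le_antisymm (hle z (hf.1.ordConnected.out hx hy hz)) hmin

theorem convexOn_half_add_one {s : Set ℝ} (hs : Convex ℝ s) :
    ConvexOn ℝ s (fun x => (x + 1) / 2) :=
  ⟨hs, fun x _ y _ a b _ _ hab =>
    le_of_eq (by simp only [smul_eq_mul]; linear_combination -hab / 2)⟩

theorem ConcaveOn.add_one_mul_deriv_lt {S : Set ℝ} {f : ℝ → ℝ} {a : ℝ} (hf : ConcaveOn ℝ S f)
    (h1S : 1 ∈ S) (haS : a ∈ S) (ha : 1 < a) (hfa : DifferentiableAt ℝ f a) (hf1 : f 1 = 1)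
    (hlt : f a < (a + 1) / 2) : (a + 1) * deriv f a < f a := by
  have hslope : deriv f a * (a - 1) ≤ f a - 1 := by
    have := hf.deriv_le_slope h1S haS ha hfa
    rwa [slope_def_field, hf1, le_div_iff₀ (by linarith)] at this
  nlinarith

theorem hasDerivAt_mul_comp_two_div_sub_one {h : ℝ → ℝ} {h' t : ℝ}
    (hh : HasDerivAt h h' (2 / t - 1)) (ht : t ≠ 0) :
    HasDerivAt (fun t => t * h (2 / t - 1)) (h (2 / t - 1) - 2 / t * h') t := by
  have hinner : HasDerivAt (fun t => 2 / t - 1) (-(2 / t ^ 2)) t := by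
    simpa [div_eq_mul_inv] using ((hasDerivAt_inv ht).const_mul 2).sub_const 1
  refine ((hasDerivAt_id' t).mul (hh.comp t hinner)).congr_deriv ?_
  rw [Function.comp_apply]
  field_simp
  ring

theorem stmt_17_general (h : ℝ → ℝ)
    (hconc : ConcaveOn ℝ (Set.Ioi (0 : ℝ)) h)
    (hdiff : ∀ x ∈ Set.Ioi (0 : ℝ), DifferentiableAt ℝ h x)
    (h1 : h 1 = 1)
    (hub : ∀ x : ℝ, 0 < x → h x ≤ (x + 1) / 2)
    (hnl : ∀ a : ℝ, 1 < a → ∃ x ∈ Set.Icc (1 : ℝ) a, h x ≠ (x + 1) / 2) :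
    (∀ t ∈ Set.Ioo (0 : ℝ) 1,
      HasDerivAt (fun t : ℝ => t * h (2 / t - 1))
        (h (2 / t - 1) - (2 / t) * deriv h (2 / t - 1)) t ∧
      0 < h (2 / t - 1) - (2 / t) * deriv h (2 / t - 1)) ∧
    StrictMonoOn (fun t : ℝ => t * h (2 / t - 1)) (Set.Ioc (0 : ℝ) 1) := by
  have hlt : ∀ a, 1 < a → h a < (a + 1) / 2 := fun a ha =>
    (hub a (by linarith)).lt_of_ne fun heq => by
      obtain ⟨x, hx, hne⟩ := hnl a ha
      exact hne (hconc.eqOn_Icc_of_le_of_eq (convexOn_half_add_one (convex_Ioi 0)) hub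
        (mem_Ioi.mpr one_pos) (by linarith : (0 : ℝ) < a) (by norm_num [h1]) heq hx)
  have hderiv : ∀ t ∈ Ioc (0 : ℝ) 1, HasDerivAt (fun t : ℝ => t * h (2 / t - 1))
      (h (2 / t - 1) - (2 / t) * deriv h (2 / t - 1)) t := fun t ⟨ht0, ht1⟩ =>
    have ha : 0 < 2 / t - 1 := by rw [sub_pos, lt_div_iff₀ ht0]; linarith
    hasDerivAt_mul_comp_two_div_sub_one (hdiff _ ha).hasDerivAt ht0.ne'
  have hpos : ∀ t ∈ Ioo (0 : ℝ) 1, 0 < h (2 / t - 1) - (2 / t) * deriv h (2 / t - 1) := by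
    rintro t ⟨ht0, ht1⟩
    have ha : 1 < 2 / t - 1 := by rw [lt_sub_iff_add_lt, lt_div_iff₀ ht0]; linarith
    have ha0 : (0 : ℝ) < 2 / t - 1 := by linarith
    have := hconc.add_one_mul_deriv_lt (mem_Ioi.mpr one_pos) ha0 ha (hdiff _ ha0) h1 (hlt _ ha)
    rw [sub_add_cancel] at this
    linarith
  refine ⟨fun t ht => ⟨hderiv t (Ioo_subset_Ioc_self ht), hpos t ht⟩, ?_⟩
  refine strictMonoOn_of_deriv_pos (convex_Ioc 0 1)
    (fun t ht => (hderiv t ht).continuousAt.continuousWithinAt) fun t ht => ?_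
  rw [interior_Ioc] at ht
  rw [(hderiv t (Ioo_subset_Ioc_self ht)).deriv]
  exact hpos t ht

theorem stmt_17 (h : ℝ → ℝ)
    (hconc : ConcaveOn ℝ (Set.Ioi (0 : ℝ)) h)
    (hdiff : ∀ x ∈ Set.Ioi (0 : ℝ), DifferentiableAt ℝ h x)
    (h1 : h 1 = 1) (hd1 : deriv h 1 = 1/2)
    (hub : ∀ x : ℝ, 0 < x → h x ≤ (x + 1) / 2)
    (hnl : ∀ a : ℝ, 1 < a → ∃ x ∈ Set.Icc (1 : ℝ) a, h x ≠ (x + 1) / 2) :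
    (∀ t ∈ Set.Ioo (0 : ℝ) 1,
      HasDerivAt (fun t : ℝ => t * h (2 / t - 1))
        (h (2 / t - 1) - (2 / t) * deriv h (2 / t - 1)) t ∧
      0 < h (2 / t - 1) - (2 / t) * deriv h (2 / t - 1)) ∧
    StrictMonoOn (fun t : ℝ => t * h (2 / t - 1)) (Set.Ioc (0 : ℝ) 1) :=
  stmt_17_general h hconc hdiff h1 hub hnl
end
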